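/- arXiv:0805.1679 — 4 statements merged into one kernel-verified Lean document; each statement's English description precedes it below -/
import Mathlib

section
/- Let U ⊆ ℝⁿ be open with coordinates (q, p, v_1, …, v_{n−2}), and let h_{ij}: U → ℝ (1 ≤ i,j ≤ n−2) be smooth functions with h_{ij} = −h_{ji}. Suppose the antisymmetric matrix field π on U whose only nonzero entries are π^{q,p} = 1 = −π^{p,q} and π^{v_i,v_j} = h_{ij} (corresponding to the bivector field Π = ∂/∂q ∧ ∂/∂p + Σ_{i,j} h_{ij} ∂/∂v_i ∧ ∂/∂v_j) satisfies the Jacobi identity Σ_l (π^{lk} ∂π^{ij}/∂x_l + π^{li} ∂π^{jk}/∂x_l + π^{lj} ∂π^{ki}/∂x_l) = 0 on U for all indices i,j,k. Then ∂h_{ij}/∂p = 0 and ∂h_{ij}/∂q = 0 on U for all i,j; that is, the functions h_{ij} depend only on the variables v_1,…,v_{n−2}. -/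
/-- Partial derivative in the coordinate direction `i` of a function on `ι → ℝ`. -/
noncomputable def pd {ι : Type*} [Fintype ι] [DecidableEq ι]
    (i : ι) (f : (ι → ℝ) → ℝ) (x : ι → ℝ) : ℝ :=
  fderiv ℝ f x (Pi.single i 1)

lemma pd_zero {ι : Type*} [Fintype ι] [DecidableEq ι] (l : ι) (x : ι → ℝ) :
    pd l (fun _ => (0:ℝ)) x = 0 := by
  simp [pd]

/-- The antisymmetric matrix field on `ℝⁿ = ℝ^{2+k}` (coordinates `(q, p, v₁, …, v_k)`,
indexed by `Fin 2 ⊕ Fin k`, with `q` the coordinate `Sum.inl 0`, `p` the coordinate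
`Sum.inl 1` and `v_i` the coordinate `Sum.inr i`) whose only nonzero entries are
`π^{q,p} = 1 = −π^{p,q}` and `π^{v_i,v_j} = h_{ij}`; it corresponds to the bivector field
`Π = ∂/∂q ∧ ∂/∂p + Σ_{i,j} h_{ij} ∂/∂v_i ∧ ∂/∂v_j`. -/
def splitMat {k : ℕ} (h : Fin k → Fin k → ((Fin 2 ⊕ Fin k) → ℝ) → ℝ)
    (x : (Fin 2 ⊕ Fin k) → ℝ) : Matrix (Fin 2 ⊕ Fin k) (Fin 2 ⊕ Fin k) ℝ :=
  Matrix.of fun a b =>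
    match a, b with
    | Sum.inl i, Sum.inl j =>
        if i = 0 ∧ j = 1 then 1 else if i = 1 ∧ j = 0 then -1 else 0
    | Sum.inr i, Sum.inr j => h i j x
    | _, _ => 0

/-- If `Π = ∂/∂q ∧ ∂/∂p + Σ_{i,j} h_{ij} ∂/∂v_i ∧ ∂/∂v_j` satisfies the Jacobi identity on
an open set `U`, then the coefficients `h_{ij}` are independent of `p` and `q` on `U`
(key inductive step in the proof of Theorem 2.1 of the paper). -/
theorem coefficients_independent_of_p_q {k : ℕ}
    (U : Set ((Fin 2 ⊕ Fin k) → ℝ)) (hU : IsOpen U)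
    (h : Fin k → Fin k → ((Fin 2 ⊕ Fin k) → ℝ) → ℝ)
    (hsm : ∀ i j, ContDiffOn ℝ (⊤ : ℕ∞) (h i j) U)
    (hanti : ∀ i j, ∀ x ∈ U, h i j x = -h j i x)
    (hjac : ∀ x ∈ U, ∀ a b c : Fin 2 ⊕ Fin k,
      ∑ l, (splitMat h x l c * pd l (fun y => splitMat h y a b) x
          + splitMat h x l a * pd l (fun y => splitMat h y b c) x
          + splitMat h x l b * pd l (fun y => splitMat h y c a) x) = 0) :
    ∀ x ∈ U, ∀ i j, pd (Sum.inl 1) (h i j) x = 0 ∧ pd (Sum.inl 0) (h i j) x = 0 := by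
  intro x hx i j
  constructor
  · have H := hjac x hx (Sum.inl 0) (Sum.inr i) (Sum.inr j)
    simp only [Fintype.sum_sum_type, Fin.sum_univ_two, splitMat, Matrix.of_apply,
      pd_zero] at H
    simp at H
    linarith [H]
  · have H := hjac x hx (Sum.inl 1) (Sum.inr i) (Sum.inr j)
    simp only [Fintype.sum_sum_type, Fin.sum_univ_two, splitMat, Matrix.of_apply,
      pd_zero] at H
    simp at H
    linarith [H]
end

section
/- Let χ, ψ: ℝ → ℝ be smooth functions. Define, for smooth functions F, G: ℝ⁴ → ℝ (with coordinates x = (x₁, x₂, x₃, x₄), thought of as (f₁, f₂, g₁, g₂)), the bracket {F,G} := (∂F/∂x₃ ∂G/∂x₁ − ∂F/∂x₁ ∂G/∂x₃) + χ(x₄)(∂F/∂x₄ ∂G/∂x₂ − ∂F/∂x₂ ∂G/∂x₄) + ψ(x₄)(∂F/∂x₃ ∂G/∂x₂ − ∂F/∂x₂ ∂G/∂x₃), corresponding to the bivector field Π = ∂/∂g₁ ∧ ∂/∂f₁ + χ(g₂) ∂/∂g₂ ∧ ∂/∂f₂ + ψ(g₂) ∂/∂g₁ ∧ ∂/∂f₂.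 Then this bracket satisfies the Jacobi identity {{F,G},H} + {{G,H},F} + {{H,F},G} = 0 for all smooth F, G, H: ℝ⁴ → ℝ (so Π is a Poisson bivector field), and the coordinate functions f₁ = x₁ and f₂ = x₂ are in involution: {x₁, x₂} = 0. -/
/-- Partial derivative of `f : ℝ⁴ → ℝ` in the `i`-th coordinate direction. -/
noncomputable def pd4 (i : Fin 4) (f : (Fin 4 → ℝ) → ℝ) (x : Fin 4 → ℝ) : ℝ :=
  fderiv ℝ f x (Pi.single i 1)

/-- The bracket on `ℝ⁴` (coordinates `(f₁, f₂, g₁, g₂) = (x 0, x 1, x 2, x 3)`) associated to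
the bivector field `Π = ∂/∂g₁ ∧ ∂/∂f₁ + χ(g₂) ∂/∂g₂ ∧ ∂/∂f₂ + ψ(g₂) ∂/∂g₁ ∧ ∂/∂f₂`. -/
noncomputable def brk (χ ψ : ℝ → ℝ) (F G : (Fin 4 → ℝ) → ℝ) (x : Fin 4 → ℝ) : ℝ :=
    (pd4 2 F x * pd4 0 G x - pd4 0 F x * pd4 2 G x)
  + χ (x 3) * (pd4 3 F x * pd4 1 G x - pd4 1 F x * pd4 3 G x)
  + ψ (x 3) * (pd4 2 F x * pd4 1 G x - pd4 1 F x * pd4 2 G x)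

section helpers

variable {f g : (Fin 4 → ℝ) → ℝ} {x : Fin 4 → ℝ} {i : Fin 4} {χ : ℝ → ℝ}

lemma contDiff_pd4 (hf : ContDiff ℝ (⊤ : ℕ∞) f) (i : Fin 4) : ContDiff ℝ (⊤ : ℕ∞) (pd4 i f) :=
  (hf.fderiv_right (m := (⊤ : ℕ∞)) (by simp)).clm_apply contDiff_const

lemma pd4_add (hf : DifferentiableAt ℝ f x) (hg : DifferentiableAt ℝ g x) :
    pd4 i (fun y => f y + g y) x = pd4 i f x + pd4 i g x := by
  simp [pd4, fderiv_fun_add hf hg]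

lemma pd4_sub (hf : DifferentiableAt ℝ f x) (hg : DifferentiableAt ℝ g x) :
    pd4 i (fun y => f y - g y) x = pd4 i f x - pd4 i g x := by
  simp [pd4, fderiv_fun_sub hf hg]

lemma pd4_mul (hf : DifferentiableAt ℝ f x) (hg : DifferentiableAt ℝ g x) :
    pd4 i (fun y => f y * g y) x = pd4 i f x * g x + f x * pd4 i g x := by
  simp [pd4, fderiv_fun_mul hf hg]; ring

lemma pd4_chi (hχ : ContDiff ℝ (⊤ : ℕ∞) χ) :
    pd4 i (fun y => χ (y 3)) x = (Pi.single i 1 : Fin 4 → ℝ) 3 * deriv χ (x 3) := by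
  have h1 : HasFDerivAt (fun y : Fin 4 → ℝ => y 3)
      (ContinuousLinearMap.proj (R := ℝ) (φ := fun _ : Fin 4 => ℝ) 3) x :=
    hasFDerivAt_apply 3 x
  have h2 : HasDerivAt χ (deriv χ (x 3)) (x 3) :=
    (hχ.differentiable (by simp) (x 3)).hasDerivAt
  have h := h2.comp_hasFDerivAt x h1
  have h' : HasFDerivAt (fun y : Fin 4 → ℝ => χ (y 3)) (deriv χ (x 3) • ContinuousLinearMap.proj (3 : Fin 4)) x := h
  simp [pd4, h'.fderiv, mul_comm]

lemma pd4_pd4 (hf : ContDiff ℝ (⊤ : ℕ∞) f) (i j : Fin 4) (x : Fin 4 → ℝ) :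
    pd4 i (pd4 j f) x = fderiv ℝ (fderiv ℝ f) x (Pi.single i 1) (Pi.single j 1) := by
  have hdf : Differentiable ℝ (fderiv ℝ f) :=
    (hf.fderiv_right (m := (⊤ : ℕ∞)) (by simp)).differentiable (by simp)
  have h : HasFDerivAt (pd4 j f)
      ((ContinuousLinearMap.apply ℝ ℝ (Pi.single j 1)).comp (fderiv ℝ (fderiv ℝ f) x)) x := by
    have heq : pd4 j f = (ContinuousLinearMap.apply ℝ ℝ (Pi.single j 1)) ∘ fderiv ℝ f := rfl
    rw [heq]
    exact (ContinuousLinearMap.apply ℝ ℝ (Pi.single j 1)).hasFDerivAt.comp x (hdf x).hasFDerivAt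
  simp [pd4, h.fderiv]

lemma pd4_symm (hf : ContDiff ℝ (⊤ : ℕ∞) f) (i j : Fin 4) (x : Fin 4 → ℝ) :
    pd4 i (pd4 j f) x = pd4 j (pd4 i f) x := by
  rw [pd4_pd4 hf, pd4_pd4 hf]
  exact second_derivative_symmetric
    (fun y => (hf.differentiable (by simp) y).hasFDerivAt)
    (((hf.fderiv_right (m := (⊤ : ℕ∞)) (by simp)).differentiable (by simp) x).hasFDerivAt) _ _

end helpers

section main

variable {χ ψ : ℝ → ℝ} {F G : (Fin 4 → ℝ) → ℝ}

lemma pd4_coord (i k : Fin 4) (x : Fin 4 → ℝ) :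
    pd4 i (fun y => y k) x = (Pi.single i 1 : Fin 4 → ℝ) k := by
  simp [pd4, (hasFDerivAt_apply k x).fderiv]

lemma contDiff_brk (hχ : ContDiff ℝ (⊤ : ℕ∞) χ) (hψ : ContDiff ℝ (⊤ : ℕ∞) ψ)
    (hF : ContDiff ℝ (⊤ : ℕ∞) F) (hG : ContDiff ℝ (⊤ : ℕ∞) G) : ContDiff ℝ (⊤ : ℕ∞) (brk χ ψ F G) := by
  have hproj : ContDiff ℝ (⊤ : ℕ∞) (fun y : Fin 4 → ℝ => y 3) :=
    (ContinuousLinearMap.proj (R := ℝ) (φ := fun _ : Fin 4 => ℝ) 3).contDiff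
  exact ((((contDiff_pd4 hF 2).mul (contDiff_pd4 hG 0)).sub
      ((contDiff_pd4 hF 0).mul (contDiff_pd4 hG 2))).add
    ((hχ.comp hproj).mul (((contDiff_pd4 hF 3).mul (contDiff_pd4 hG 1)).sub
      ((contDiff_pd4 hF 1).mul (contDiff_pd4 hG 3))))).add
    ((hψ.comp hproj).mul (((contDiff_pd4 hF 2).mul (contDiff_pd4 hG 1)).sub
      ((contDiff_pd4 hF 1).mul (contDiff_pd4 hG 2))))

lemma pd4_brk (hχ : ContDiff ℝ (⊤ : ℕ∞) χ) (hψ : ContDiff ℝ (⊤ : ℕ∞) ψ)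
    (hF : ContDiff ℝ (⊤ : ℕ∞) F) (hG : ContDiff ℝ (⊤ : ℕ∞) G) (i : Fin 4) (x : Fin 4 → ℝ) :
    pd4 i (brk χ ψ F G) x =
        (pd4 i (pd4 2 F) x * pd4 0 G x + pd4 2 F x * pd4 i (pd4 0 G) x
          - (pd4 i (pd4 0 F) x * pd4 2 G x + pd4 0 F x * pd4 i (pd4 2 G) x))
      + ((Pi.single i 1 : Fin 4 → ℝ) 3 * deriv χ (x 3))
          * (pd4 3 F x * pd4 1 G x - pd4 1 F x * pd4 3 G x)
      + χ (x 3) * (pd4 i (pd4 3 F) x * pd4 1 G x + pd4 3 F x * pd4 i (pd4 1 G) x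
          - (pd4 i (pd4 1 F) x * pd4 3 G x + pd4 1 F x * pd4 i (pd4 3 G) x))
      + ((Pi.single i 1 : Fin 4 → ℝ) 3 * deriv ψ (x 3))
          * (pd4 2 F x * pd4 1 G x - pd4 1 F x * pd4 2 G x)
      + ψ (x 3) * (pd4 i (pd4 2 F) x * pd4 1 G x + pd4 2 F x * pd4 i (pd4 1 G) x
          - (pd4 i (pd4 1 F) x * pd4 2 G x + pd4 1 F x * pd4 i (pd4 2 G) x)) := by
  have dF : ∀ j : Fin 4, DifferentiableAt ℝ (pd4 j F) x :=
    fun j => (contDiff_pd4 hF j).differentiable (by simp) x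
  have dG : ∀ j : Fin 4, DifferentiableAt ℝ (pd4 j G) x :=
    fun j => (contDiff_pd4 hG j).differentiable (by simp) x
  have hproj : ContDiff ℝ (⊤ : ℕ∞) (fun y : Fin 4 → ℝ => y 3) :=
    (ContinuousLinearMap.proj (R := ℝ) (φ := fun _ : Fin 4 => ℝ) 3).contDiff
  have dχ : DifferentiableAt ℝ (fun y : Fin 4 → ℝ => χ (y 3)) x :=
    (hχ.comp hproj).differentiable (by simp) x
  have dψ : DifferentiableAt ℝ (fun y : Fin 4 → ℝ => ψ (y 3)) x :=
    (hψ.comp hproj).differentiable (by simp) x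
  have hT1 : DifferentiableAt ℝ (fun y => pd4 2 F y * pd4 0 G y - pd4 0 F y * pd4 2 G y) x :=
    ((dF 2).mul (dG 0)).sub ((dF 0).mul (dG 2))
  have hT2 : DifferentiableAt ℝ (fun y => pd4 3 F y * pd4 1 G y - pd4 1 F y * pd4 3 G y) x :=
    ((dF 3).mul (dG 1)).sub ((dF 1).mul (dG 3))
  have hT3 : DifferentiableAt ℝ (fun y => pd4 2 F y * pd4 1 G y - pd4 1 F y * pd4 2 G y) x :=
    ((dF 2).mul (dG 1)).sub ((dF 1).mul (dG 2))
  rw [show brk χ ψ F G = fun y =>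
      ((pd4 2 F y * pd4 0 G y - pd4 0 F y * pd4 2 G y)
        + χ (y 3) * (pd4 3 F y * pd4 1 G y - pd4 1 F y * pd4 3 G y))
      + ψ (y 3) * (pd4 2 F y * pd4 1 G y - pd4 1 F y * pd4 2 G y) from rfl]
  rw [pd4_add (hT1.fun_add (dχ.fun_mul hT2)) (dψ.fun_mul hT3), pd4_add hT1 (dχ.fun_mul hT2),
    pd4_sub ((dF 2).fun_mul (dG 0)) ((dF 0).fun_mul (dG 2)),
    pd4_mul dχ hT2, pd4_mul dψ hT3,
    pd4_sub ((dF 3).fun_mul (dG 1)) ((dF 1).fun_mul (dG 3)),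
    pd4_sub ((dF 2).fun_mul (dG 1)) ((dF 1).fun_mul (dG 2)),
    pd4_mul (dF 2) (dG 0), pd4_mul (dF 0) (dG 2),
    pd4_mul (dF 3) (dG 1), pd4_mul (dF 1) (dG 3),
    pd4_mul (dF 2) (dG 1), pd4_mul (dF 1) (dG 2),
    pd4_chi hχ, pd4_chi hψ]
  ring

end main

/-- The bracket associated to `Π = ∂/∂g₁ ∧ ∂/∂f₁ + χ(g₂) ∂/∂g₂ ∧ ∂/∂f₂ + ψ(g₂) ∂/∂g₁ ∧ ∂/∂f₂`
satisfies the Jacobi identity (i.e. `Π` is a Poisson bivector field), and the coordinate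
functions `f₁` and `f₂` are in involution. -/
theorem jacobi_and_involution (χ ψ : ℝ → ℝ) (hχ : ContDiff ℝ (⊤ : ℕ∞) χ) (hψ : ContDiff ℝ (⊤ : ℕ∞) ψ) :
    (∀ F G H : (Fin 4 → ℝ) → ℝ, ContDiff ℝ (⊤ : ℕ∞) F → ContDiff ℝ (⊤ : ℕ∞) G → ContDiff ℝ (⊤ : ℕ∞) H →
      ∀ x : Fin 4 → ℝ,
        brk χ ψ (brk χ ψ F G) H x + brk χ ψ (brk χ ψ G H) F x
          + brk χ ψ (brk χ ψ H F) G x = 0) ∧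
    (∀ x : Fin 4 → ℝ, brk χ ψ (fun y => y 0) (fun y => y 1) x = 0) := by
  constructor
  · intro F G H hF hG hH x
    simp only [brk]
    simp only [pd4_brk hχ hψ hF hG, pd4_brk hχ hψ hG hH, pd4_brk hχ hψ hH hF]
    simp only [Pi.single_apply, Fin.reduceEq, if_true, if_false, reduceIte, one_mul, zero_mul, mul_zero, mul_one, add_zero, zero_add]
    simp only [pd4_symm hF 1 0, pd4_symm hF 2 0, pd4_symm hF 2 1,
      pd4_symm hF 3 0, pd4_symm hF 3 1, pd4_symm hF 3 2,
      pd4_symm hG 1 0, pd4_symm hG 2 0, pd4_symm hG 2 1,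
      pd4_symm hG 3 0, pd4_symm hG 3 1, pd4_symm hG 3 2,
      pd4_symm hH 1 0, pd4_symm hH 2 0, pd4_symm hH 2 1,
      pd4_symm hH 3 0, pd4_symm hH 3 1, pd4_symm hH 3 2]
    ring
  · intro x
    simp only [brk, pd4_coord, Pi.single_apply, Fin.reduceEq, if_true, if_false, reduceIte]
    norm_num
end

section
/- Let c be a nonzero real number and let ε > 0. There is no smooth function r: (−ε, ε) → ℝ such that x² · r'(x) = −c · x for all x ∈ (−ε, ε). -/
/-- The differential equation `x² · r'(x) = −c · x` (with `c ≠ 0`) admits no solution `r`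
that is smooth on the interval `(−ε, ε)`. -/
theorem no_smooth_solution (c : ℝ) (hc : c ≠ 0) (ε : ℝ) (hε : 0 < ε) :
    ¬ ∃ r : ℝ → ℝ, ContDiffOn ℝ (⊤ : ℕ∞) r (Set.Ioo (-ε) ε) ∧
      ∀ x ∈ Set.Ioo (-ε) ε, x ^ 2 * deriv r x = -c * x := by
  rintro ⟨r, hr, heq⟩
  have hcont : ContinuousOn (deriv r) (Set.Ioo (-ε) ε) :=
    hr.continuousOn_deriv_of_isOpen isOpen_Ioo (by simp)
  have h0 : (0 : ℝ) ∈ Set.Ioo (-ε) ε := ⟨by linarith, hε⟩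
  have hc' : 0 < |c| := abs_pos.mpr hc
  set M : ℝ := |deriv r 0| + 1 with hM
  have hMpos : 0 < M := by positivity
  obtain ⟨δ, hδ, hδ'⟩ := Metric.continuousOn_iff.mp hcont 0 h0 1 one_pos
  set x : ℝ := min (min (ε / 2) (δ / 2)) (|c| / (2 * M)) with hx
  have hxpos : 0 < x := by
    apply lt_min (lt_min (by linarith) (by linarith))
    positivity
  have hxε : x < ε := lt_of_le_of_lt (le_trans (min_le_left _ _) (min_le_left _ _)) (by linarith)
  have hxmem : x ∈ Set.Ioo (-ε) ε := ⟨by linarith, hxε⟩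
  have hxδ : dist x 0 < δ := by
    rw [Real.dist_eq, sub_zero, abs_of_pos hxpos]
    calc x ≤ δ / 2 := le_trans (min_le_left _ _) (min_le_right _ _)
    _ < δ := by linarith
  have hclose := hδ' x hxmem hxδ
  rw [Real.dist_eq] at hclose
  have habs : |deriv r x| < M := by
    calc |deriv r x| ≤ |deriv r x - deriv r 0| + |deriv r 0| := by
          have := abs_sub_abs_le_abs_sub (deriv r x) (deriv r 0); linarith [abs_sub (deriv r x) (deriv r 0)]
    _ < M := by rw [hM]; linarith
  -- deriv r x = -c / x
  have hdx : deriv r x = -c / x := by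
    have := heq x hxmem
    field_simp at this ⊢
    nlinarith [sq_nonneg x]
  have hbig : M ≤ |deriv r x| := by
    rw [hdx, abs_div, abs_neg, abs_of_pos hxpos]
    rw [le_div_iff₀ hxpos]
    have hxle : x ≤ |c| / (2 * M) := min_le_right _ _
    calc M * x ≤ M * (|c| / (2 * M)) := by nlinarith
    _ = |c| / 2 := by field_simp
    _ ≤ |c| := by linarith
  linarith
end

section
/- Let A be a real n × n antisymmetric matrix with rank A = 2r, and let W ⊆ ℝⁿ be a linear subspace with dim W = n − r such that xᵀ A y = 0 for all x, y ∈ W. Then the kernel of A is contained in W, and the image A(W) := {A w : w ∈ W} equals the orthogonal complement W^⊥ of W (with respect to the standard inner product on ℝⁿ); in particular dim A(W) = r. -/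
/-!
Isotropy of `W` says exactly that `A(W)` lies in the dot-product orthogonal `W^⊥`, which has
dimension `r`. Rank–nullity for `A` restricted to `W` gives
`dim A(W) = (n - r) - dim (ker A ⊓ W) ≥ (n - r) - (n - 2r) = r`, so both inequalities are
equalities: `A(W) = W^⊥` and `ker A ⊓ W = ker A`.
-/

open Matrix Module

section

variable {K V V' : Type*} [Field K] [AddCommGroup V] [Module K V] [AddCommGroup V'] [Module K V']
  [FiniteDimensional K V]

theorem LinearMap.finrank_map_add_finrank_ker_inf (f : V →ₗ[K] V') (U : Submodule K V) :
    finrank K (U.map f) + finrank K (LinearMap.ker f ⊓ U : Submodule K V) = finrank K U := by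
  have h := LinearMap.finrank_range_add_finrank_ker (f.domRestrict U)
  have hker : (LinearMap.ker f).comap U.subtype = (LinearMap.ker f ⊓ U).comap U.subtype := by
    rw [Submodule.comap_inf, Submodule.comap_subtype_self, inf_top_eq]
  rwa [LinearMap.range_domRestrict, LinearMap.ker_domRestrict, hker,
    (Submodule.comapSubtypeEquivOfLe inf_le_right).finrank_eq] at h

theorem LinearMap.ker_le_and_map_eq_of_map_le (f : V →ₗ[K] V') {U : Submodule K V}
    {P : Submodule K V'} [FiniteDimensional K P] (hle : U.map f ≤ P)
    (hdim : finrank K P + finrank K (LinearMap.ker f) ≤ finrank K U) :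
    LinearMap.ker f ≤ U ∧ U.map f = P := by
  have hsum := f.finrank_map_add_finrank_ker_inf U
  have hmap := Submodule.finrank_mono hle
  have hker := Submodule.finrank_mono (inf_le_left : LinearMap.ker f ⊓ U ≤ LinearMap.ker f)
  refine ⟨?_, Submodule.eq_of_le_of_finrank_le hle (by omega)⟩
  have hinf : LinearMap.ker f ⊓ U = LinearMap.ker f :=
    Submodule.eq_of_le_of_finrank_le inf_le_left (by omega)
  exact inf_eq_left.mp hinf

end

theorem Matrix.dotProductBilin_nondegenerate {K m : Type*} [Field K] [Fintype m] :
    (dotProductBilin K K : LinearMap.BilinForm K (m → K)).Nondegenerate :=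
  ⟨fun _ h => dotProduct_eq_zero_iff.mp h,
    fun _ h => dotProduct_eq_zero_iff.mp fun x => by simpa [dotProduct_comm] using h x⟩

theorem Matrix.finrank_orthogonalBilin_dotProductBilin {K m : Type*} [Field K] [Fintype m]
    (W : Submodule K (m → K)) :
    finrank K (W.orthogonalBilin (dotProductBilin K K)) = Fintype.card m - finrank K W := by
  have h := LinearMap.BilinForm.finrank_orthogonal dotProductBilin_nondegenerate W
  rwa [finrank_fintype_fun_eq_card] at h

theorem Matrix.finrank_ker_mulVecLin {K m n : Type*} [Field K] [Fintype m] [Fintype n]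
    (A : Matrix m n K) : finrank K (LinearMap.ker A.mulVecLin) = Fintype.card n - A.rank := by
  have := LinearMap.finrank_range_add_finrank_ker A.mulVecLin
  rw [finrank_fintype_fun_eq_card] at this
  unfold Matrix.rank
  omega

theorem isotropic_subspace_image_general (n r : ℕ) (A : Matrix (Fin n) (Fin n) ℝ)
    (hrank : A.rank = 2 * r)
    (W : Submodule ℝ (Fin n → ℝ)) (hdim : Module.finrank ℝ W = n - r)
    (hiso : ∀ x ∈ W, ∀ y ∈ W, dotProduct x (A.mulVec y) = 0) :
    (∀ x : Fin n → ℝ, A.mulVec x = 0 → x ∈ W) ∧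
    (A.mulVec '' (W : Set (Fin n → ℝ))
      = {y : Fin n → ℝ | ∀ w ∈ W, dotProduct w y = 0}) ∧
    Module.finrank ℝ (Submodule.map A.mulVecLin W) = r := by
  set Wperp := W.orthogonalBilin (dotProductBilin ℝ ℝ)
  have hrank_le : A.rank ≤ n := A.rank_le_width
  have hWperp : finrank ℝ Wperp = r := by
    rw [finrank_orthogonalBilin_dotProductBilin, Fintype.card_fin, hdim]
    omega
  have hle : W.map A.mulVecLin ≤ Wperp := by
    rintro _ ⟨w, hw, rfl⟩ x hx
    exact hiso x hx w hw
  obtain ⟨hker, hmap⟩ := A.mulVecLin.ker_le_and_map_eq_of_map_le hle (by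
    rw [hWperp, A.finrank_ker_mulVecLin, Fintype.card_fin]
    omega)
  refine ⟨fun x hx => hker hx, ?_, hmap ▸ hWperp⟩
  -- the carrier of `orthogonalBilin` is by definition the set on the right-hand side
  exact congrArg SetLike.coe hmap

/-- Pointwise linear algebra underlying Proposition 3.2 of the paper: if `A` is a real
antisymmetric `n × n` matrix of rank `2r` and `W` is an `(n−r)`-dimensional subspace of `ℝⁿ`
on which the bilinear form of `A` vanishes, then `ker A ⊆ W` and `A(W)` is the orthogonal
complement of `W` for the standard inner product; in particular `dim A(W) = r`. -/
theorem isotropic_subspace_image (n r : ℕ) (A : Matrix (Fin n) (Fin n) ℝ)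
    (hanti : Aᵀ = -A) (hrank : A.rank = 2 * r)
    (W : Submodule ℝ (Fin n → ℝ)) (hdim : Module.finrank ℝ W = n - r)
    (hiso : ∀ x ∈ W, ∀ y ∈ W, dotProduct x (A.mulVec y) = 0) :
    (∀ x : Fin n → ℝ, A.mulVec x = 0 → x ∈ W) ∧
    (A.mulVec '' (W : Set (Fin n → ℝ))
      = {y : Fin n → ℝ | ∀ w ∈ W, dotProduct w y = 0}) ∧
    Module.finrank ℝ (Submodule.map A.mulVecLin W) = r :=
  isotropic_subspace_image_general n r A hrank W hdim hiso
end
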